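/- arXiv:2111.12997 — 5 statements merged into one kernel-verified Lean document; each statement's English description precedes it below -/
import Mathlib

section
/- Fix an even integer P ≥ 4, an integer a > P−1, reals γ, β' > 0 and q̄ ∈ [0,1). Define, for N large enough that β'N^{1−P/2}(1−q̄^{P/2}) < 1, E_N := −(β'γ/2)N^{a−P/2} − (γ/2)N^{a−1} ln(1 − β'N^{1−P/2}(1−q̄^{P/2})) + (γ/2)N^{a−P/2} · β'q̄^{P/2}/(1 − β'N^{1−P/2}(1−q̄^{P/2})). Then E_N/N^{a+1−P} → (1/4)γβ'²(1−q̄^P) as N → ∞; in particular E_N → +∞, so the replica-symmetric quenched pressure of the dense Hebbian network cannot remain finite in the thermodynamic limit unless a ≤ P−1 (i.e. the maximal storage scaling is K = γN^{P−1}). -/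
open MeasureTheory Real Filter

theorem stmt1 (P a : ℕ) (hPe : Even P) (hP : 4 ≤ P) (ha : P - 1 < a)
    (γ β' : ℝ) (hγ : 0 < γ) (hβ : 0 < β') (qb : ℝ) (hq0 : 0 ≤ qb) (hq1 : qb < 1) :
    Tendsto (fun N : ℕ =>
        (-(β' * γ / 2) * (N : ℝ) ^ ((a : ℝ) - (P : ℝ)/2)
          - (γ/2) * (N : ℝ) ^ ((a : ℝ) - 1) *
              Real.log (1 - β' * (N : ℝ) ^ (1 - (P : ℝ)/2) * (1 - qb ^ (P/2)))
          + (γ/2) * (N : ℝ) ^ ((a : ℝ) - (P : ℝ)/2) *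
              (β' * qb ^ (P/2) / (1 - β' * (N : ℝ) ^ (1 - (P : ℝ)/2) * (1 - qb ^ (P/2)))))
        / (N : ℝ) ^ ((a : ℝ) + 1 - (P : ℝ)))
      atTop (nhds ((1/4) * γ * β' ^ 2 * (1 - qb ^ P)))
    ∧
    Tendsto (fun N : ℕ =>
        -(β' * γ / 2) * (N : ℝ) ^ ((a : ℝ) - (P : ℝ)/2)
          - (γ/2) * (N : ℝ) ^ ((a : ℝ) - 1) *
              Real.log (1 - β' * (N : ℝ) ^ (1 - (P : ℝ)/2) * (1 - qb ^ (P/2)))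
          + (γ/2) * (N : ℝ) ^ ((a : ℝ) - (P : ℝ)/2) *
              (β' * qb ^ (P/2) / (1 - β' * (N : ℝ) ^ (1 - (P : ℝ)/2) * (1 - qb ^ (P/2)))))
      atTop atTop := by
  set q : ℝ := qb ^ (P / 2) with hqdef
  have hq0' : 0 ≤ q := pow_nonneg hq0 _
  have hq1' : q < 1 := pow_lt_one₀ hq0 hq1 (by omega)
  set c : ℝ := β' * (1 - q) with hcdef
  have hc : 0 < c := mul_pos hβ (by linarith)
  set t : ℕ → ℝ := fun N => (N : ℝ) ^ (1 - (P : ℝ)/2) with htdef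
  -- t N → 0
  have ht0 : Tendsto t atTop (nhds 0) := by
    have hy : (0:ℝ) < (P : ℝ)/2 - 1 := by
      have : (4:ℝ) ≤ (P:ℝ) := by exact_mod_cast hP
      linarith
    have h1 : Tendsto (fun x : ℝ => x ^ (-((P : ℝ)/2 - 1))) atTop (nhds 0) :=
      tendsto_rpow_neg_atTop hy
    have h2 := h1.comp (tendsto_natCast_atTop_atTop (R := ℝ))
    refine h2.congr fun N => ?_
    simp only [Function.comp_apply, htdef]
    congr 1
    ring
  have htpos : ∀ N : ℕ, 1 ≤ N → 0 < t N := by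
    intro N hN
    exact Real.rpow_pos_of_pos (by exact_mod_cast hN) _
  -- eventually c * t N < 1/2
  have hev : ∀ᶠ N : ℕ in atTop, c * t N < 1/2 :=
    (ht0.const_mul c).eventually_lt_const (by norm_num)
  have hev1 : ∀ᶠ N : ℕ in atTop, 1 ≤ N := eventually_ge_atTop 1
  -- The RHS reformulation
  set G : ℕ → ℝ := fun N =>
    (γ/2) * ((β'*c - c^2)/(1 - c * t N) + c^2/2
      - (Real.log (1 - c * t N) + c * t N + c^2 * (t N)^2/2)/(t N)^2) with hGdef
  -- eventual equality of expr/D with G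
  have hkey : ∀ᶠ N : ℕ in atTop,
      (-(β' * γ / 2) * (N : ℝ) ^ ((a : ℝ) - (P : ℝ)/2)
          - (γ/2) * (N : ℝ) ^ ((a : ℝ) - 1) *
              Real.log (1 - β' * (N : ℝ) ^ (1 - (P : ℝ)/2) * (1 - qb ^ (P/2)))
          + (γ/2) * (N : ℝ) ^ ((a : ℝ) - (P : ℝ)/2) *
              (β' * qb ^ (P/2) / (1 - β' * (N : ℝ) ^ (1 - (P : ℝ)/2) * (1 - qb ^ (P/2)))))
        / (N : ℝ) ^ ((a : ℝ) + 1 - (P : ℝ)) = G N := by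
    filter_upwards [hev, hev1] with N hlt hN
    have hx : (0:ℝ) < (N : ℝ) := by exact_mod_cast hN
    have ht : 0 < t N := htpos N hN
    have h1 : 0 < 1 - c * t N := by linarith
    have harg : β' * (N : ℝ) ^ (1 - (P : ℝ)/2) * (1 - qb ^ (P/2)) = c * t N := by
      rw [hcdef, htdef]; ring
    have hD : (0:ℝ) < (N : ℝ) ^ ((a : ℝ) + 1 - (P : ℝ)) := Real.rpow_pos_of_pos hx _
    have e1 : (N : ℝ) ^ ((a : ℝ) - (P : ℝ)/2)
        = (N : ℝ) ^ ((a : ℝ) + 1 - (P : ℝ)) / t N := by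
      rw [eq_div_iff ht.ne', htdef, ← Real.rpow_add hx]; congr 1; ring
    have e2 : (N : ℝ) ^ ((a : ℝ) - 1)
        = (N : ℝ) ^ ((a : ℝ) + 1 - (P : ℝ)) / (t N)^2 := by
      rw [eq_div_iff (pow_ne_zero 2 ht.ne'), htdef, sq, ← Real.rpow_add hx,
        ← Real.rpow_add hx]
      congr 1; ring
    have hq' : β' * q = β' - c := by rw [hcdef]; ring
    rw [harg, e1, e2, hq', hGdef]
    set L := Real.log (1 - c * t N) with hL
    have h1' : 1 - c * t N ≠ 0 := h1.ne'
    beta_reduce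
    rw [← hL]
    field_simp
    linear_combination (2 * β' * t N - 2 * t N * c) *
      (mul_inv_cancel₀ (show 1 - t N * c ≠ 0 by rw [mul_comm]; exact h1'))
  -- the remainder term tends to 0
  have hrem : Tendsto (fun N =>
      (Real.log (1 - c * t N) + c * t N + c^2 * (t N)^2/2)/(t N)^2) atTop (nhds 0) := by
    apply squeeze_zero_norm' (a := fun N => 2 * c^3 * t N)
    · filter_upwards [hev, hev1] with N hlt hN
      have ht : 0 < t N := htpos N hN
      have hu : 0 < c * t N := mul_pos hc ht
      have habs : |c * t N| < 1 := by rw [abs_of_pos hu]; linarith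
      have hbd := Real.abs_log_sub_add_sum_range_le habs 2
      rw [abs_of_pos hu] at hbd
      have hsum : (∑ i ∈ Finset.range 2, (c * t N) ^ (i + 1) / ((i:ℕ) + 1 : ℝ))
          = c * t N + (c * t N)^2 / 2 := by
        norm_num [Finset.sum_range_succ]
      rw [hsum] at hbd
      have hnum : |Real.log (1 - c * t N) + c * t N + c^2 * (t N)^2/2|
          ≤ (c * t N)^3 / (1 - c * t N) := by
        rw [show Real.log (1 - c * t N) + c * t N + c^2 * (t N)^2/2
          = c * t N + (c * t N)^2/2 + Real.log (1 - c * t N) by ring]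
        exact hbd
      have hfin : (c * t N)^3 / (1 - c * t N) ≤ 2 * c^3 * t N * (t N)^2 := by
        rw [div_le_iff₀ (by linarith)]
        nlinarith [mul_nonneg (pow_pos hu 3).le
          (show (0:ℝ) ≤ 1 - 2*(c*t N) by linarith)]
      rw [norm_eq_abs, abs_div, abs_of_pos (pow_pos ht 2), div_le_iff₀ (pow_pos ht 2)]
      exact le_trans hnum hfin
    · have := (ht0.const_mul (2 * c^3))
      simpa using this
  -- limit of G
  have hden : Tendsto (fun N => 1 - c * t N) atTop (nhds 1) := by
    have h : Tendsto (fun N : ℕ => 1 - c * t N) atTop (nhds (1 - c * 0)) :=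
      tendsto_const_nhds.sub (ht0.const_mul c)
    simpa using h
  have hmain : Tendsto (fun N => (β'*c - c^2)/(1 - c * t N)) atTop
      (nhds ((β'*c - c^2)/1)) := tendsto_const_nhds.div hden one_ne_zero
  have hG : Tendsto G atTop
      (nhds ((γ/2) * ((β'*c - c^2)/1 + c^2/2 - 0))) := by
    exact tendsto_const_nhds.mul ((hmain.add tendsto_const_nhds).sub hrem)
  have hval : (γ/2) * ((β'*c - c^2)/1 + c^2/2 - 0)
      = (1/4) * γ * β' ^ 2 * (1 - qb ^ P) := by
    have hqP : qb ^ P = q^2 := by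
      obtain ⟨m, hm⟩ := hPe
      rw [hqdef, ← pow_mul]
      congr 1
      omega
    rw [hqP, hcdef]
    ring
  have part1 : Tendsto (fun N : ℕ =>
        (-(β' * γ / 2) * (N : ℝ) ^ ((a : ℝ) - (P : ℝ)/2)
          - (γ/2) * (N : ℝ) ^ ((a : ℝ) - 1) *
              Real.log (1 - β' * (N : ℝ) ^ (1 - (P : ℝ)/2) * (1 - qb ^ (P/2)))
          + (γ/2) * (N : ℝ) ^ ((a : ℝ) - (P : ℝ)/2) *
              (β' * qb ^ (P/2) / (1 - β' * (N : ℝ) ^ (1 - (P : ℝ)/2) * (1 - qb ^ (P/2)))))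
        / (N : ℝ) ^ ((a : ℝ) + 1 - (P : ℝ)))
      atTop (nhds ((1/4) * γ * β' ^ 2 * (1 - qb ^ P))) := by
    rw [← hval]
    exact hG.congr' (Filter.EventuallyEq.symm hkey)
  refine ⟨part1, ?_⟩
  have hL : 0 < (1/4) * γ * β' ^ 2 * (1 - qb ^ P) := by
    have : qb ^ P < 1 := pow_lt_one₀ hq0 hq1 (by omega)
    have h1 : 0 < 1 - qb ^ P := by linarith
    positivity
  have hDinf : Tendsto (fun N : ℕ => (N : ℝ) ^ ((a : ℝ) + 1 - (P : ℝ))) atTop atTop := by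
    have hpos : (0:ℝ) < (a : ℝ) + 1 - (P : ℝ) := by
      have haP : P ≤ a := by omega
      have : (P:ℝ) ≤ (a:ℝ) := by exact_mod_cast haP
      linarith
    exact (tendsto_rpow_atTop hpos).comp tendsto_natCast_atTop_atTop
  have := Tendsto.pos_mul_atTop hL part1 hDinf
  refine this.congr' ?_
  filter_upwards [hev1] with N hN
  have hx : (0:ℝ) < (N : ℝ) := by exact_mod_cast hN
  have hD : (0:ℝ) < (N : ℝ) ^ ((a : ℝ) + 1 - (P : ℝ)) := Real.rpow_pos_of_pos hx _
  exact div_mul_cancel₀ _ hD.ne'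
end

section
/- Fix an even integer P ≥ 2 and γ > 0. Suppose that for each β' > 0 there are m̄(β') ∈ [−1,1] and q̄(β') ∈ (0,1) satisfying the replica-symmetric self-consistency equations m̄(β') = ⟨tanh(β'((P/2)m̄(β')^{P−1} + x√(γ(P/2)q̄(β')^{P−1})))⟩_x and q̄(β') = ⟨tanh²(β'((P/2)m̄(β')^{P−1} + x√(γ(P/2)q̄(β')^{P−1})))⟩_x. If sup_{β'>0} β'(1−q̄(β')) < ∞ and m̄(β') → m* as β' → ∞, then the zero-temperature self-consistency equation holds: m* = erf( (1/2)√(P/γ) (m*)^{P−1} ). -/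
open MeasureTheory ProbabilityTheory Real Filter Topology

/-- Expectation of `f x` for a standard Gaussian `x ~ N(0,1)`. -/
noncomputable def gExp (f : ℝ → ℝ) : ℝ := ∫ y, f y ∂(gaussianReal 0 1)

/-- The error function. -/
noncomputable def erf (u : ℝ) : ℝ := (2 / Real.sqrt π) * ∫ t in (0:ℝ)..u, Real.exp (-t^2)


lemma tanh_eq' (x : ℝ) : Real.tanh x = (1 - Real.exp (-(2*x))) / (1 + Real.exp (-(2*x))) := by
  rw [Real.tanh_eq_sinh_div_cosh, Real.sinh_eq, Real.cosh_eq]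
  have h2 : Real.exp x * Real.exp (-x) = 1 := by rw [← Real.exp_add]; simp
  have h1 : Real.exp (-(2*x)) = Real.exp (-x) * Real.exp (-x) := by
    rw [← Real.exp_add]; ring_nf
  have hpos := Real.exp_pos x
  have hpos2 := Real.exp_pos (-x)
  rw [h1]; field_simp; nlinarith [h2]

lemma abs_tanh_le_one (x : ℝ) : |Real.tanh x| ≤ 1 := by
  rw [tanh_eq', abs_div]
  have h := Real.exp_pos (-(2*x))
  rw [abs_of_pos (by linarith : (0:ℝ) < 1 + Real.exp (-(2*x))), div_le_one (by linarith)]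
  rw [abs_le]; constructor <;> linarith

lemma tendsto_exp_neg_two_mul : Tendsto (fun x : ℝ => Real.exp (-(2*x))) atTop (𝓝 0) := by
  apply Real.tendsto_exp_atBot.comp
  apply tendsto_neg_atBot_iff.mpr
  exact Tendsto.const_mul_atTop (by norm_num) tendsto_id

lemma tendsto_tanh_atTop : Tendsto Real.tanh atTop (𝓝 1) := by
  have h := tendsto_exp_neg_two_mul
  have : Tendsto (fun x : ℝ => (1 - Real.exp (-(2*x))) / (1 + Real.exp (-(2*x)))) atTop
      (𝓝 ((1 - 0) / (1 + 0))) :=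
    Tendsto.div ((tendsto_const_nhds).sub h) ((tendsto_const_nhds).add h) (by norm_num)
  simp only [sub_zero, add_zero, div_one] at this
  exact this.congr (fun x => (tanh_eq' x).symm)

lemma tendsto_tanh_atBot : Tendsto Real.tanh atBot (𝓝 (-1)) := by
  have := (tendsto_tanh_atTop.comp tendsto_neg_atBot_atTop).neg
  simp only [Function.comp] at this
  simpa [Real.tanh_neg] using this

noncomputable def phi (y : ℝ) : ℝ := gaussianPDFReal 0 1 y

lemma phi_def (y : ℝ) : phi y = (Real.sqrt (2 * π))⁻¹ * Real.exp (-y^2/2) := by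
  simp [phi, gaussianPDFReal]

lemma phi_even (y : ℝ) : phi (-y) = phi y := by simp [phi_def]

lemma integrable_phi : Integrable phi := integrable_gaussianPDFReal 0 1

lemma Phi_def (t : ℝ) : (gaussianReal 0 1 (Set.Iic t)).toReal = ∫ y in Set.Iic t, phi y := by
  rw [gaussianReal_apply_eq_integral 0 (by norm_num) (Set.Iic t), ENNReal.toReal_ofReal]
  · rfl
  · exact setIntegral_nonneg measurableSet_Iic (fun y _ => gaussianPDFReal_nonneg 0 1 y)

lemma Phi_zero : ∫ y in Set.Iic (0:ℝ), phi y = 1/2 := by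
  have htot : ∫ y, phi y = 1 := integral_gaussianPDFReal_eq_one 0 (by norm_num)
  have hsym : ∫ y in Set.Ioi (0:ℝ), phi y = ∫ y in Set.Iic (0:ℝ), phi y := by
    have := integral_comp_neg_Ioi (0:ℝ) phi
    simp only [phi_even, neg_zero] at this
    rw [this]
  have hsplit : (∫ y in Set.Iic (0:ℝ), phi y) + ∫ y in Set.Ioi (0:ℝ), phi y = ∫ y, phi y := by
    rw [← setIntegral_union (by simp [Set.disjoint_left]) measurableSet_Ioi
      integrable_phi.integrableOn integrable_phi.integrableOn]
    simp [Set.Iic_union_Ioi]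
  rw [hsym] at hsplit
  linarith [hsplit.trans htot]

lemma Phi_interval (c : ℝ) :
    (∫ y in Set.Iic (0:ℝ), phi y) - ∫ y in Set.Iic (-c), phi y = ∫ y in (-c)..0, phi y :=
  intervalIntegral.integral_Iic_sub_Iic integrable_phi.integrableOn integrable_phi.integrableOn

lemma integral_sign (c : ℝ) :
    (∫ y, (if y ≤ -c then (-1:ℝ) else 1) ∂(gaussianReal 0 1)) = erf (c / Real.sqrt 2) := by
  have hfun : (fun y : ℝ => if y ≤ -c then (-1:ℝ) else 1)
      = fun y => 1 - 2 * (Set.Iic (-c)).indicator (fun _ => (1:ℝ)) y := by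
    funext y
    by_cases h : y ≤ -c <;> simp [h, Set.indicator_apply, Set.mem_Iic] <;> norm_num
  rw [hfun]
  have hind : Integrable ((Set.Iic (-c)).indicator (fun _ => (1:ℝ))) (gaussianReal 0 1) :=
    (integrable_const 1).indicator measurableSet_Iic
  rw [integral_sub (integrable_const 1) (hind.const_mul 2), integral_const_mul,
    integral_indicator_const (1:ℝ) measurableSet_Iic]
  simp only [measureReal_def, measure_univ, integral_const, smul_eq_mul, ENNReal.toReal_one, one_mul]
  rw [Phi_def]
  rw [mul_one]
  have key : (1:ℝ) - 2 * (∫ y in Set.Iic (-c), phi y) = 2 * ∫ y in (-c)..0, phi y := by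
    rw [← Phi_interval c, Phi_zero]; ring
  rw [key]
  -- substitute
  have hflip : ∫ y in (-c)..0, phi y = ∫ y in (0:ℝ)..c, phi y := by
    have h1 := intervalIntegral.integral_comp_neg (a := (0:ℝ)) (b := c) phi
    simp only [phi_even, neg_zero] at h1
    exact h1.symm
  rw [hflip]
  have hsub : ∫ y in (0:ℝ)..c, Real.exp (-(y/Real.sqrt 2)^2) 
      = Real.sqrt 2 * ∫ t in ((0:ℝ)/Real.sqrt 2)..(c/Real.sqrt 2), Real.exp (-t^2) := by
    rw [intervalIntegral.integral_comp_div (fun t => Real.exp (-t^2)) 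
      (by positivity : Real.sqrt 2 ≠ 0)]
    simp
  have hphi : ∀ y : ℝ, phi y = (Real.sqrt (2*π))⁻¹ * Real.exp (-(y/Real.sqrt 2)^2) := by
    intro y
    rw [phi_def]
    congr 1
    rw [div_pow, Real.sq_sqrt (by norm_num : (0:ℝ) ≤ 2)]
    ring_nf
  simp only [hphi]
  rw [intervalIntegral.integral_const_mul, hsub, erf]
  rw [zero_div]
  have h2π : Real.sqrt (2*π) = Real.sqrt 2 * Real.sqrt π := Real.sqrt_mul (by norm_num) _
  have hs2 : (0:ℝ) < Real.sqrt 2 := by positivity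
  have hsπ : (0:ℝ) < Real.sqrt π := Real.sqrt_pos.mpr Real.pi_pos
  field_simp [h2π]
  rw [h2π]
  ring

theorem stmt4 (P : ℕ) (hPe : Even P) (hP : 2 ≤ P) (γ : ℝ) (hγ : 0 < γ)
    (mb qb : ℝ → ℝ) (mstar : ℝ)
    (hm : ∀ β' : ℝ, 0 < β' → mb β' ∈ Set.Icc (-1:ℝ) 1)
    (hq : ∀ β' : ℝ, 0 < β' → qb β' ∈ Set.Ioo (0:ℝ) 1)
    (heqm : ∀ β' : ℝ, 0 < β' →
      mb β' = gExp (fun x => Real.tanh (β' * (((P : ℝ)/2) * (mb β') ^ (P - 1)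
        + x * Real.sqrt (γ * ((P : ℝ)/2) * (qb β') ^ (P - 1))))))
    (heqq : ∀ β' : ℝ, 0 < β' →
      qb β' = gExp (fun x => (Real.tanh (β' * (((P : ℝ)/2) * (mb β') ^ (P - 1)
        + x * Real.sqrt (γ * ((P : ℝ)/2) * (qb β') ^ (P - 1))))) ^ 2))
    (hbound : ∃ C : ℝ, ∀ β' : ℝ, 0 < β' → β' * (1 - qb β') ≤ C)
    (hlim : Tendsto mb atTop (nhds mstar)) :
    mstar = erf ((1/2) * Real.sqrt ((P : ℝ)/γ) * mstar ^ (P - 1)) := by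

  obtain ⟨C, hC⟩ := hbound
  have hPn : 0 < P := lt_of_lt_of_le (by norm_num) hP
  have hPpos : (0:ℝ) < (P:ℝ) := by exact_mod_cast hPn
  set A : ℝ := (P:ℝ)/2 with hAdef
  have hA0 : 0 < A := by positivity
  -- q tends to 1
  have hq1 : Tendsto qb atTop (𝓝 1) := by
    have hlow : Tendsto (fun β : ℝ => 1 - C/β) atTop (𝓝 1) := by
      have : Tendsto (fun β : ℝ => C/β) atTop (𝓝 0) :=
        Tendsto.div_atTop tendsto_const_nhds tendsto_id
      simpa using tendsto_const_nhds.sub this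
    refine tendsto_of_tendsto_of_tendsto_of_le_of_le' hlow tendsto_const_nhds ?_ ?_
    · filter_upwards [eventually_gt_atTop (0:ℝ)] with β hβ
      have h1 := hC β hβ
      have h2 : 1 - qb β ≤ C / β := by
        rw [le_div_iff₀ hβ]; linarith [mul_comm β (1 - qb β)]
      linarith
    · filter_upwards [eventually_gt_atTop (0:ℝ)] with β hβ
      exact (hq β hβ).2.le
  set astar : ℝ := A * mstar ^ (P-1) with hastar
  set bstar : ℝ := Real.sqrt (γ * A) with hbstar
  have hb0 : 0 < bstar := Real.sqrt_pos.mpr (by positivity)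
  have ha : Tendsto (fun β => A * mb β ^ (P-1)) atTop (𝓝 astar) :=
    Tendsto.const_mul A (hlim.pow (P-1))
  have hb : Tendsto (fun β => Real.sqrt (γ * A * qb β ^ (P-1))) atTop (𝓝 bstar) := by
    have h1 : Tendsto (fun β => γ * A * qb β ^ (P-1)) atTop (𝓝 (γ * A)) := by
      have := Tendsto.const_mul (γ * A) (hq1.pow (P-1))
      simpa using this
    exact (Real.continuous_sqrt.tendsto (γ * A)).comp h1
  set c : ℝ := astar / bstar with hcdef
  set g : ℝ → ℝ := fun y => if y ≤ -c then (-1:ℝ) else 1 with hgdef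
  have cont_tanh : Continuous Real.tanh := by
    have ht : Real.tanh = fun x => Real.sinh x / Real.cosh x :=
      funext fun x => @Real.tanh_eq_sinh_div_cosh x
    rw [ht]
    exact Real.continuous_sinh.div Real.continuous_cosh (fun x => (Real.cosh_pos x).ne')
  set F : ℝ → ℝ → ℝ := fun β y => Real.tanh (β * (A * mb β ^ (P-1)
    + y * Real.sqrt (γ * A * qb β ^ (P-1)))) with hFdef
  have hae : ∀ᵐ y ∂(gaussianReal 0 1), y ≠ -c := by
    have h0 : gaussianReal 0 1 {(-c)} = 0 :=
      gaussianReal_absolutelyContinuous 0 one_ne_zero (volume_singleton)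
    rw [ae_iff]
    convert h0 using 2
    ext y; simp
  have hDCT : Tendsto (fun β => ∫ y, F β y ∂(gaussianReal 0 1)) atTop
      (𝓝 (∫ y, g y ∂(gaussianReal 0 1))) := by
    refine tendsto_integral_filter_of_dominated_convergence (fun _ => (1:ℝ)) ?_ ?_
      (integrable_const 1) ?_
    · filter_upwards with β
      exact (cont_tanh.comp (continuous_const.mul (continuous_const.add
        (continuous_id.mul continuous_const)))).aestronglyMeasurable
    · filter_upwards with β
      filter_upwards with y
      exact abs_tanh_le_one _
    · filter_upwards [hae] with y hy
      have hL : Tendsto (fun β => A * mb β ^ (P-1)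
          + y * Real.sqrt (γ * A * qb β ^ (P-1))) atTop (𝓝 (astar + y * bstar)) :=
        ha.add (hb.const_mul y)
      have hyne : astar + y * bstar ≠ 0 := by
        intro h
        apply hy
        have hyy : y = -astar / bstar := by field_simp; linarith
        rw [hyy, hcdef]; ring
      rcases lt_or_gt_of_ne hyne with hneg | hpos
      · have hprod : Tendsto (fun β : ℝ => β * (A * mb β ^ (P-1)
            + y * Real.sqrt (γ * A * qb β ^ (P-1)))) atTop atBot :=
          Tendsto.atTop_mul_neg hneg tendsto_id hL
        have : Tendsto (fun β => F β y) atTop (𝓝 (-1)) :=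
          tendsto_tanh_atBot.comp hprod
        convert this using 2
        have hyle : y ≤ -c := by
          rw [hcdef, ← neg_div]
          exact ((lt_div_iff₀ hb0).mpr (by linarith)).le
        simp [hgdef, hyle]
      · have hprod : Tendsto (fun β : ℝ => β * (A * mb β ^ (P-1)
            + y * Real.sqrt (γ * A * qb β ^ (P-1)))) atTop atTop :=
          Tendsto.atTop_mul_pos hpos tendsto_id hL
        have : Tendsto (fun β => F β y) atTop (𝓝 1) :=
          tendsto_tanh_atTop.comp hprod
        convert this using 2
        have hyle : ¬ (y ≤ -c) := by
          rw [hcdef, ← neg_div]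
          exact not_le.mpr ((div_lt_iff₀ hb0).mpr (by linarith))
        simp [hgdef, hyle]
  -- mb eventually equals the integral
  have heq : mb =ᶠ[atTop] fun β => ∫ y, F β y ∂(gaussianReal 0 1) := by
    filter_upwards [eventually_gt_atTop (0:ℝ)] with β hβ
    rw [heqm β hβ]
    rfl
  have hlim2 : Tendsto mb atTop (𝓝 (∫ y, g y ∂(gaussianReal 0 1))) :=
    hDCT.congr' heq.symm
  have hms : mstar = ∫ y, g y ∂(gaussianReal 0 1) := tendsto_nhds_unique hlim hlim2
  have hsγ : (0:ℝ) < Real.sqrt γ := Real.sqrt_pos.mpr hγ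
  have hsP : (0:ℝ) < Real.sqrt P := Real.sqrt_pos.mpr hPpos
  have hs2 : (0:ℝ) < Real.sqrt 2 := by positivity
  have h1 : Real.sqrt (γ * A) * Real.sqrt 2 = Real.sqrt γ * Real.sqrt P := by
    rw [← Real.sqrt_mul (by positivity) 2, ← Real.sqrt_mul hγ.le]
    congr 1
    rw [hAdef]; ring
  have h2 : Real.sqrt ((P:ℝ)/γ) = Real.sqrt P / Real.sqrt γ :=
    Real.sqrt_div hPpos.le γ
  have h3 : Real.sqrt (P:ℝ) * Real.sqrt (P:ℝ) = (P:ℝ) := Real.mul_self_sqrt hPpos.le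
  have harg : c / Real.sqrt 2 = 1/2 * Real.sqrt ((P:ℝ)/γ) * mstar ^ (P-1) := by
    rw [hcdef, hastar, hbstar, div_div, h1, h2, hAdef]
    field_simp
    ring_nf
    rw [Real.sq_sqrt hPpos.le]
    ring
  rw [← harg, hms, hgdef]
  exact integral_sign c
end

section
/- For each integer P ≥ 2 there is a unique s_P > 0 with erf(√(s_P)/2) = 1 − 1/P, and s_P/(4 ln P) → 1 as P → ∞. Equivalently, the zero-temperature critical capacity γ_C(P) := P/s_P, defined by the condition erf((1/2)√(P/γ_C(P))) = 1 − 1/P, satisfies γ_C(P)·(ln P)/P → 1/4 as P → ∞; in particular γ_C(P) diverges with P like P/ln P. -/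
open Real Filter

section Aux
open MeasureTheory Set

lemma hg_int : Integrable (fun t : ℝ => Real.exp (-t^2)) := by
  simpa using integrable_exp_neg_mul_sq (one_pos)

lemma hg_cont : Continuous (fun t : ℝ => Real.exp (-t^2)) := by continuity

lemma hg_ii (a b : ℝ) : IntervalIntegrable (fun t : ℝ => Real.exp (-t^2)) volume a b :=
  hg_cont.intervalIntegrable a b

lemma erf_cont : Continuous erf :=
  continuous_const.mul (intervalIntegral.continuous_primitive hg_ii 0)

lemma sqrt_pi_pos : 0 < Real.sqrt π := Real.sqrt_pos.2 Real.pi_pos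

lemma c_ge_one : 1 ≤ 2 / Real.sqrt π := by
  rw [le_div_iff₀ sqrt_pi_pos, one_mul]
  calc Real.sqrt π ≤ Real.sqrt 4 := Real.sqrt_le_sqrt Real.pi_le_four
    _ = 2 := by rw [show (4:ℝ) = 2^2 by norm_num, Real.sqrt_sq (by norm_num)]

lemma erf_strictMono : StrictMono erf := by
  intro a b hab
  have h := intervalIntegral.integral_add_adjacent_intervals (hg_ii 0 a) (hg_ii a b)
  have hpos : 0 < ∫ t in a..b, Real.exp (-t^2) :=
    intervalIntegral.intervalIntegral_pos_of_pos (hg_ii a b) (fun x => Real.exp_pos _) hab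
  unfold erf
  rw [← h, mul_add]
  nlinarith [mul_pos (div_pos two_pos sqrt_pi_pos) hpos]

lemma integral_Ioi_zero : ∫ t in Ioi (0:ℝ), Real.exp (-t^2) = Real.sqrt π / 2 := by
  have := integral_gaussian_Ioi 1
  simpa using this

lemma key (u : ℝ) (hu : 0 ≤ u) :
    1 - erf u = (2 / Real.sqrt π) * ∫ t in Ioi u, Real.exp (-t^2) := by
  have hsplit : (∫ t in Ioi (0:ℝ), Real.exp (-t^2)) =
      (∫ t in (0:ℝ)..u, Real.exp (-t^2)) + ∫ t in Ioi u, Real.exp (-t^2) := by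
    rw [intervalIntegral.integral_of_le hu, ← setIntegral_union]
    · rw [Ioc_union_Ioi_eq_Ioi hu]
    · exact Ioc_disjoint_Ioi le_rfl
    · exact measurableSet_Ioi
    · exact hg_int.integrableOn
    · exact hg_int.integrableOn
  have h1 : (2 / Real.sqrt π) * (Real.sqrt π / 2) = 1 := by
    field_simp
  unfold erf
  rw [← h1, ← integral_Ioi_zero, hsplit, mul_add]
  ring

lemma erf_zero : erf 0 = 0 := by simp [erf]

lemma erf_tendsto : Tendsto erf atTop (nhds 1) := by
  have h : Tendsto (fun u : ℝ => ∫ t in (0:ℝ)..u, Real.exp (-t^2)) atTop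
      (nhds (∫ t in Ioi (0:ℝ), Real.exp (-t^2))) :=
    intervalIntegral_tendsto_integral_Ioi 0 hg_int.integrableOn tendsto_id
  have h2 : Tendsto erf atTop (nhds ((2 / Real.sqrt π) * (Real.sqrt π / 2))) :=
    (h.const_mul _).congr (fun u => rfl) |>.mono_right (by rw [integral_Ioi_zero])
  have : (2 / Real.sqrt π) * (Real.sqrt π / 2) = 1 := by field_simp
  rwa [this] at h2

-- upper bound: 1 - erf u ≤ 2 exp(-u²) for u ≥ 0
lemma ub (u : ℝ) (hu : 0 ≤ u) : 1 - erf u ≤ 2 * Real.exp (-u^2) := by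
  rw [key u hu]
  have hshift : Integrable (fun t : ℝ => Real.exp (-(t - u)^2)) :=
    hg_int.comp_sub_right u
  have h1 : (∫ t in Ioi u, Real.exp (-t^2)) ≤
      ∫ t in Ioi u, Real.exp (-u^2) * Real.exp (-(t-u)^2) := by
    apply setIntegral_mono_on hg_int.integrableOn
      ((hshift.const_mul _).integrableOn) measurableSet_Ioi
    intro t ht
    rw [← Real.exp_add, Real.exp_le_exp]
    simp only [mem_Ioi] at ht
    nlinarith
  have h2 : (∫ t in Ioi u, Real.exp (-u^2) * Real.exp (-(t-u)^2))
      ≤ ∫ t : ℝ, Real.exp (-u^2) * Real.exp (-(t-u)^2) := by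
    apply setIntegral_le_integral (hshift.const_mul _)
    filter_upwards with t
    positivity
  have h3 : (∫ t : ℝ, Real.exp (-u^2) * Real.exp (-(t-u)^2))
      = Real.exp (-u^2) * Real.sqrt π := by
    rw [integral_const_mul]
    congr 1
    rw [integral_sub_right_eq_self (fun t : ℝ => Real.exp (-t^2)) u]
    have := integral_gaussian 1
    simpa using this
  have hπ := sqrt_pi_pos
  calc (2 / Real.sqrt π) * ∫ t in Ioi u, Real.exp (-t^2)
      ≤ (2 / Real.sqrt π) * (Real.exp (-u^2) * Real.sqrt π) := by
        apply mul_le_mul_of_nonneg_left (le_trans h1 (le_trans h2 h3.le)) (by positivity)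
    _ = 2 * Real.exp (-u^2) := by field_simp

-- lower bound : exp(-(u+1)²) ≤ 1 - erf u for u ≥ 0
lemma lb (u : ℝ) (hu : 0 ≤ u) : Real.exp (-(u+1)^2) ≤ 1 - erf u := by
  rw [key u hu]
  have h1 : Real.exp (-(u+1)^2) ≤ ∫ t in Ioc u (u+1), Real.exp (-t^2) := by
    have : Real.exp (-(u+1)^2) = ∫ _t in Ioc u (u+1), Real.exp (-(u+1)^2) := by
      rw [setIntegral_const, Real.volume_real_Ioc]
      simp
    rw [this]
    apply setIntegral_mono_on (integrableOn_const (by simp [Real.volume_Ioc]))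
      (hg_int.integrableOn) measurableSet_Ioc
    intro t ht
    rw [Real.exp_le_exp]
    simp only [mem_Ioc] at ht
    nlinarith
  have h2 : (∫ t in Ioc u (u+1), Real.exp (-t^2)) ≤ ∫ t in Ioi u, Real.exp (-t^2) := by
    apply setIntegral_mono_set hg_int.integrableOn
    · filter_upwards with t using (Real.exp_pos _).le
    · exact (Ioc_subset_Ioi_self).eventuallyLE
  have hc := c_ge_one
  nlinarith [Real.exp_pos (-(u+1)^2)]

lemma exists_unique_part (P : ℕ) (hP : 2 ≤ P) :
    ∃! s : ℝ, 0 < s ∧ erf (Real.sqrt s / 2) = 1 - 1/(P : ℝ) := by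
  have hP1 : (1:ℝ) ≤ P := by exact_mod_cast Nat.one_le_of_lt hP
  have hP0 : (0:ℝ) < P := lt_of_lt_of_le one_pos hP1
  set y : ℝ := 1 - 1/(P:ℝ) with hy
  have hy0 : 0 < y := by
    have : 1/(P:ℝ) ≤ 1/2 := by
      apply div_le_div_of_nonneg_left one_pos.le two_pos
      exact_mod_cast hP
    simp only [hy]; linarith
  have hy1 : y < 1 := by
    have : 0 < 1/(P:ℝ) := by positivity
    simp only [hy]; linarith
  -- find b with erf b > y
  obtain ⟨b, hb⟩ : ∃ b : ℝ, y < erf b := by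
    have := erf_tendsto.eventually (eventually_gt_nhds hy1)
    obtain ⟨b, hb⟩ := this.exists
    exact ⟨b, hb⟩
  have hb0 : (0:ℝ) ≤ b := by
    by_contra h
    have := erf_strictMono (lt_of_not_ge h)
    rw [erf_zero] at this
    linarith
  obtain ⟨u, hu_mem, hu⟩ : ∃ u ∈ Icc (0:ℝ) b, erf u = y := by
    apply intermediate_value_Icc hb0 erf_cont.continuousOn
    constructor
    · rw [erf_zero]; exact hy0.le
    · exact hb.le
  have hu0 : 0 < u := by
    rcases lt_or_eq_of_le hu_mem.1 with h | h
    · exact h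
    · exfalso; rw [← h, erf_zero] at hu; linarith
  refine ⟨4 * u^2, ⟨by positivity, ?_⟩, ?_⟩
  · have : Real.sqrt (4 * u^2) = 2 * u := by
      rw [show 4 * u^2 = (2*u)^2 by ring, Real.sqrt_sq (by positivity)]
    rw [this]
    field_simp
    exact hu
  · rintro s' ⟨hs'0, hs'⟩
    have : Real.sqrt s' / 2 = u := erf_strictMono.injective (by rw [hs', hu])
    have h2 : Real.sqrt s' = 2 * u := by linarith [this]
    have := Real.sq_sqrt hs'0.le
    rw [h2] at this
    nlinarith

lemma sqrt_tendsto_atTop : Tendsto Real.sqrt atTop atTop := by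
  have h := tendsto_rpow_atTop (y := (1:ℝ)/2) (by norm_num)
  refine h.congr' ?_
  filter_upwards [eventually_ge_atTop (0:ℝ)] with x hx
  rw [Real.sqrt_eq_rpow]

lemma hlogN : Tendsto (fun P : ℕ => Real.log P) atTop atTop :=
  Real.tendsto_log_atTop.comp tendsto_natCast_atTop_atTop

lemma asymp1 (s : ℕ → ℝ)
    (hs : ∀ P : ℕ, 2 ≤ P → 0 < s P ∧ erf (Real.sqrt (s P) / 2) = 1 - 1/(P : ℝ)) :
    Tendsto (fun P : ℕ => s P / (4 * Real.log P)) atTop (nhds 1) := by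
  have hlo : Tendsto (fun P : ℕ => 1 - 2 / Real.sqrt (Real.log P)) atTop (nhds 1) := by
    have h0 : Tendsto (fun P : ℕ => 2 / Real.sqrt (Real.log P)) atTop (nhds 0) :=
      tendsto_const_nhds.div_atTop (sqrt_tendsto_atTop.comp hlogN)
    simpa using tendsto_const_nhds.sub h0
  have hhi : Tendsto (fun P : ℕ => 1 + Real.log 2 / Real.log P) atTop (nhds 1) := by
    have h0 : Tendsto (fun P : ℕ => Real.log 2 / Real.log P) atTop (nhds 0) :=
      tendsto_const_nhds.div_atTop hlogN
    simpa using tendsto_const_nhds.add h0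
  apply tendsto_of_tendsto_of_tendsto_of_le_of_le' hlo hhi
  · -- lower bound eventually
    filter_upwards [eventually_ge_atTop 2, hlogN.eventually_ge_atTop 4] with P hP2 hL4
    obtain ⟨hspos, herf⟩ := hs P hP2
    set L := Real.log P with hL
    set u := Real.sqrt (s P) / 2 with hu
    have hu0 : 0 < u := by
      have := Real.sqrt_pos.2 hspos
      positivity
    have hs4 : s P = 4 * u^2 := by
      have := Real.sq_sqrt hspos.le
      rw [hu]; nlinarith
    have hP0 : (0:ℝ) < P := by positivity
    have h1P : 1 - erf u = 1/(P:ℝ) := by rw [herf]; ring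
    -- lower bound: exp(-(u+1)^2) ≤ 1/P so L ≤ (u+1)^2
    have hlb := lb u hu0.le
    rw [h1P] at hlb
    have hLle : L ≤ (u+1)^2 := by
      have h2 : (P:ℝ) ≤ Real.exp ((u+1)^2) := by
        rw [Real.exp_neg, one_div, inv_le_inv₀ (Real.exp_pos _) hP0] at hlb
        exact hlb
      calc L = Real.log P := rfl
        _ ≤ Real.log (Real.exp ((u+1)^2)) := Real.log_le_log hP0 h2
        _ = (u+1)^2 := Real.log_exp _
    have hsqle : Real.sqrt L ≤ u + 1 := by
      calc Real.sqrt L ≤ Real.sqrt ((u+1)^2) := Real.sqrt_le_sqrt hLle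
        _ = u + 1 := Real.sqrt_sq (by positivity)
    have hL0 : (0:ℝ) < L := by linarith
    have hsl : Real.sqrt L * Real.sqrt L = L := Real.mul_self_sqrt hL0.le
    have hsL2 : (2:ℝ) ≤ Real.sqrt L := by
      calc (2:ℝ) = Real.sqrt 4 := by
            rw [show (4:ℝ) = 2^2 by norm_num, Real.sqrt_sq (by norm_num)]
        _ ≤ Real.sqrt L := Real.sqrt_le_sqrt hL4
    rw [hs4, le_div_iff₀ (by positivity)]
    have ha : (2 / Real.sqrt L) * Real.sqrt L = 2 := by
      field_simp
    nlinarith [sq_nonneg (u - (Real.sqrt L - 1)), hu0.le]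
  · -- upper bound eventually
    filter_upwards [eventually_ge_atTop 2, hlogN.eventually_ge_atTop 4] with P hP2 hL4
    obtain ⟨hspos, herf⟩ := hs P hP2
    set L := Real.log P with hL
    set u := Real.sqrt (s P) / 2 with hu
    have hu0 : 0 < u := by
      have := Real.sqrt_pos.2 hspos
      positivity
    have hs4 : s P = 4 * u^2 := by
      have := Real.sq_sqrt hspos.le
      rw [hu]; nlinarith
    have hP0 : (0:ℝ) < P := by positivity
    have h1P : 1 - erf u = 1/(P:ℝ) := by rw [herf]; ring
    have hub := ub u hu0.le
    rw [h1P] at hub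
    have hu2 : u^2 ≤ Real.log 2 + L := by
      have h2 : Real.exp (u^2) ≤ 2 * P := by
        rw [Real.exp_neg, ← div_eq_mul_inv, div_le_div_iff₀ hP0 (Real.exp_pos _), one_mul] at hub
        linarith
      calc u^2 = Real.log (Real.exp (u^2)) := (Real.log_exp _).symm
        _ ≤ Real.log (2 * P) := Real.log_le_log (Real.exp_pos _) h2
        _ = Real.log 2 + L := by rw [Real.log_mul two_ne_zero (ne_of_gt hP0)]
    have hL0 : (0:ℝ) < L := by linarith
    rw [hs4, div_le_iff₀ (by positivity)]
    have : Real.log 2 / L * L = Real.log 2 := by field_simp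
    nlinarith

end Aux

theorem stmt5 :
    (∀ P : ℕ, 2 ≤ P → ∃! s : ℝ, 0 < s ∧ erf (Real.sqrt s / 2) = 1 - 1/(P : ℝ))
    ∧ (∀ s : ℕ → ℝ,
        (∀ P : ℕ, 2 ≤ P → 0 < s P ∧ erf (Real.sqrt (s P) / 2) = 1 - 1/(P : ℝ)) →
        Tendsto (fun P : ℕ => s P / (4 * Real.log P)) atTop (nhds 1)
        ∧ Tendsto (fun P : ℕ => ((P : ℝ) / s P) * Real.log P / (P : ℝ)) atTop (nhds (1/4))) := by
  refine ⟨exists_unique_part, fun s hs => ⟨asymp1 s hs, ?_⟩⟩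
  have h1 := asymp1 s hs
  have h2 : Tendsto (fun P : ℕ => (1/4 : ℝ) * (s P / (4 * Real.log P))⁻¹) atTop
      (nhds ((1/4) * 1⁻¹)) := (h1.inv₀ one_ne_zero).const_mul _
  rw [show ((1:ℝ)/4) * 1⁻¹ = 1/4 by norm_num] at h2
  refine h2.congr' ?_
  filter_upwards [eventually_ge_atTop 2, hlogN.eventually_ge_atTop 4] with P hP2 hL4
  obtain ⟨hspos, _⟩ := hs P hP2
  have hP0 : (0:ℝ) < P := by positivity
  have hL0 : (0:ℝ) < Real.log P := by linarith
  field_simp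
end

section
/- Let β, γ > 0, m̄ ∈ ℝ and q̄ ∈ [0,1) with β(1−q̄) < 1. Define β₂ := 1 − β(1−q̄), β₁ := β√γ/β₂, p̄ := βq̄/β₂² and q̄_G := βq̄/β₂². Define the replica-symmetric pressures: A_NN := ln 2 + ⟨ln cosh(βm̄ + Y√(βγp̄))⟩_Y − (β/2)m̄² − (βγ/2)p̄(1−q̄) + γβq̄/(2β₂) − (γ/2)ln β₂ (the RS pressure of the Hopfield model at load γ); A_SK(β,β₁) := ln 2 + ⟨ln cosh(βm̄ + Yβ₁√q̄)⟩_Y − (β/2)m̄² + (β₁²/4)(1−q̄)² (the RS pressure of the Sherrington–Kirkpatrick model with external signal βm̄ at noise β₁); A_Gauss(β₂,β) := (1/2)β₂²q̄_G/(1−β+β₂²q̄_G) − (1/2)ln(1−β+β₂²q̄_G) + (β₂²/4)q̄_G² (the RS pressure of the Gaussian spin glass at noise β₂ with Lagrange parameter λ = β). Then A_NN = A_SK(β,β₁) + γ·A_Gauss(β₂,β) − β₁²/4. -/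
open MeasureTheory ProbabilityTheory Real Filter

theorem stmt8 (β γ mb qb : ℝ) (hβ : 0 < β) (hγ : 0 < γ)
    (hq0 : 0 ≤ qb) (hq1 : qb < 1) (hβq : β * (1 - qb) < 1)
    (β₂ β₁ pb qbG : ℝ)
    (hβ₂ : β₂ = 1 - β * (1 - qb))
    (hβ₁ : β₁ = β * Real.sqrt γ / β₂)
    (hpb : pb = β * qb / β₂ ^ 2)
    (hqbG : qbG = β * qb / β₂ ^ 2) :
    -- A_NN = A_SK + γ ⬝ A_Gauss − β₁²/4
    (Real.log 2 + gExp (fun Y => Real.log (Real.cosh (β * mb + Y * Real.sqrt (β * γ * pb))))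
        - (β/2) * mb ^ 2 - (β * γ / 2) * pb * (1 - qb)
        + γ * β * qb / (2 * β₂) - (γ/2) * Real.log β₂)
    = (Real.log 2 + gExp (fun Y => Real.log (Real.cosh (β * mb + Y * β₁ * Real.sqrt qb)))
        - (β/2) * mb ^ 2 + (β₁ ^ 2 / 4) * (1 - qb) ^ 2)
      + γ * ((1/2) * β₂ ^ 2 * qbG / (1 - β + β₂ ^ 2 * qbG)
          - (1/2) * Real.log (1 - β + β₂ ^ 2 * qbG) + (β₂ ^ 2 / 4) * qbG ^ 2)
      - β₁ ^ 2 / 4 := by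
  have hβ₂pos : 0 < β₂ := by rw [hβ₂]; linarith
  have hβ₂ne : β₂ ≠ 0 := ne_of_gt hβ₂pos
  have h1 : 1 - β + β₂ ^ 2 * qbG = β₂ := by
    rw [hqbG]; field_simp; rw [hβ₂]; ring
  have hβ₁nn : 0 ≤ β₁ := by
    rw [hβ₁]; positivity
  have hs : Real.sqrt (β * γ * pb) = β₁ * Real.sqrt qb := by
    have h2 : β * γ * pb = β₁ ^ 2 * qb := by
      rw [hpb, hβ₁, div_pow, mul_pow, sq_sqrt hγ.le]; field_simp
    rw [h2, Real.sqrt_mul (sq_nonneg _), Real.sqrt_sq hβ₁nn]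
  have hfun : (fun Y => Real.log (Real.cosh (β * mb + Y * Real.sqrt (β * γ * pb))))
      = (fun Y => Real.log (Real.cosh (β * mb + Y * β₁ * Real.sqrt qb))) := by
    funext y; rw [hs, mul_assoc]
  have hβ₁sq : β₁ ^ 2 = β ^ 2 * γ / β₂ ^ 2 := by
    rw [hβ₁, div_pow, mul_pow, sq_sqrt hγ.le]
  rw [hfun, h1, hpb, hqbG, hβ₁sq]
  generalize gExp (fun Y => Real.log (Real.cosh (β * mb + Y * β₁ * Real.sqrt qb))) = G
  field_simp
  ring
end

section
/- Let β, γ > 0, θ ∈ (0,1), m̄ ∈ ℝ and 0 < q̄₁ ≤ q̄₂ < 1 with D₂ := 1−β(1−q̄₂) > 0 and D₁ := D₂ − θβ(q̄₂−q̄₁) > 0. Set p̄₁ := βq̄₁/D₁² and p̄₂ := p̄₁ + β(q̄₂−q̄₁)/(D₁D₂), β_G^{(1)} := D₁, β_G^{(2)} := √(βq̄₂/p̄₂), β_SK^{(a)} := β√γ/β_G^{(a)} (a = 1,2). Define: A_NN := ln 2 + θ⁻¹E₁[ln E₂[cosh^θ(βm̄ + J⁽¹⁾β√(γq̄₁)/D₁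 + J⁽²⁾β√(γ(q̄₂−q̄₁)/(D₁D₂)))]] − (β/2)m̄² + (γβ/2)q̄₁/D₁ − (γβ/2)p̄₂(1−q̄₂) − (γβθ/2)(p̄₂q̄₂ − p̄₁q̄₁) + (γ/(2θ))ln(1 + θβ(q̄₂−q̄₁)/D₁) − (γ/2)ln D₂ (the 1-RSB pressure of the Hopfield model); A_SK := ln 2 + θ⁻¹E₁[ln E₂[cosh^θ(βm̄ + J⁽¹⁾√((β_SK^{(1)})²q̄₁) + J⁽²⁾√((β_SK^{(2)})²q̄₂ − (β_SK^{(1)})²q̄₁))]] − (β/2)m̄² + (β_SK^{(2)})²/4 − ((β_SK^{(2)})²/2)q̄₂ + θ((β_SK^{(1)})²/4)q̄₁² + (1−θ)((β_SK^{(2)})²/4)q̄₂² (the 1-RSB Sherrington–Kirkpatrick pressure at noises β_SK^{(1)}, β_SK^{(2)} with overlaps q̄₁, q̄₂); A_G := −θ(β/4)q̄₂p̄₂ + θ(β/4)q̄₁p̄₁ + (β/4)q̄₂p̄₂ − (1/2)ln D₂ + (1/(2θ))ln(1 + θβ(q̄₂−q̄₁)/D₁) + (β/2)q̄₁/D₁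 (the 1-RSB Gaussian spin-glass pressure at noises β_G^{(1)}, β_G^{(2)} with overlaps q_G^{(a)} = βq̄_a/(β_G^{(a)})² = p̄_a and Lagrange parameter λ = β). Then A_NN = A_SK + γ·A_G − (β_SK^{(2)})²/4. -/
open MeasureTheory ProbabilityTheory Real Filter

theorem stmt10 (β γ θ mb qb1 qb2 : ℝ) (hβ : 0 < β) (hγ : 0 < γ)
    (hθ : θ ∈ Set.Ioo (0:ℝ) 1) (hq1 : 0 < qb1) (hq12 : qb1 ≤ qb2) (hq2 : qb2 < 1)
    (D₁ D₂ pb1 pb2 βG1 βG2 βSK1 βSK2 : ℝ)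
    (hD₂ : D₂ = 1 - β * (1 - qb2)) (hD₂pos : 0 < D₂)
    (hD₁ : D₁ = D₂ - θ * β * (qb2 - qb1)) (hD₁pos : 0 < D₁)
    (hp1 : pb1 = β * qb1 / D₁ ^ 2)
    (hp2 : pb2 = pb1 + β * (qb2 - qb1) / (D₁ * D₂))
    (hβG1 : βG1 = D₁)
    (hβG2 : βG2 = Real.sqrt (β * qb2 / pb2))
    (hβSK1 : βSK1 = β * Real.sqrt γ / βG1)
    (hβSK2 : βSK2 = β * Real.sqrt γ / βG2) :
    -- A_NN = A_SK + γ ⬝ A_G − (β_SK^{(2)})²/4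
    (Real.log 2
      + θ⁻¹ * gExp (fun j1 => Real.log (gExp (fun j2 =>
          Real.cosh (β * mb + j1 * β * Real.sqrt (γ * qb1) / D₁
            + j2 * β * Real.sqrt (γ * (qb2 - qb1) / (D₁ * D₂))) ^ θ)))
      - (β/2) * mb ^ 2
      + (γ * β / 2) * qb1 / D₁
      - (γ * β / 2) * pb2 * (1 - qb2)
      - (γ * β * θ / 2) * (pb2 * qb2 - pb1 * qb1)
      + (γ / (2 * θ)) * Real.log (1 + θ * β * (qb2 - qb1) / D₁)
      - (γ/2) * Real.log D₂)
    = (Real.log 2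
        + θ⁻¹ * gExp (fun j1 => Real.log (gExp (fun j2 =>
            Real.cosh (β * mb + j1 * Real.sqrt (βSK1 ^ 2 * qb1)
              + j2 * Real.sqrt (βSK2 ^ 2 * qb2 - βSK1 ^ 2 * qb1)) ^ θ)))
        - (β/2) * mb ^ 2
        + βSK2 ^ 2 / 4
        - (βSK2 ^ 2 / 2) * qb2
        + θ * (βSK1 ^ 2 / 4) * qb1 ^ 2
        + (1 - θ) * (βSK2 ^ 2 / 4) * qb2 ^ 2)
      + γ * (-θ * (β/4) * qb2 * pb2 + θ * (β/4) * qb1 * pb1 + (β/4) * qb2 * pb2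
          - (1/2) * Real.log D₂
          + (1 / (2 * θ)) * Real.log (1 + θ * β * (qb2 - qb1) / D₁)
          + (β/2) * qb1 / D₁)
      - βSK2 ^ 2 / 4 := by
  have hθ0 : 0 < θ := hθ.1
  have hq2pos : 0 < qb2 := lt_of_lt_of_le hq1 hq12
  have hpb1 : 0 < pb1 := by rw [hp1]; positivity
  have hpb2 : 0 < pb2 := by
    rw [hp2]
    have : 0 ≤ β * (qb2 - qb1) / (D₁ * D₂) := by
      apply div_nonneg
      · nlinarith
      · positivity
    linarith
  have hβG2pos : 0 < βG2 := by
    rw [hβG2]; apply Real.sqrt_pos.2; positivity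
  have hSK1sq : βSK1 ^ 2 = β ^ 2 * γ / D₁ ^ 2 := by
    rw [hβSK1, hβG1, div_pow, mul_pow, Real.sq_sqrt hγ.le]
  have hβG2sq : βG2 ^ 2 = β * qb2 / pb2 := by
    rw [hβG2, Real.sq_sqrt (by positivity)]
  have hSK2sq : βSK2 ^ 2 = β * γ * pb2 / qb2 := by
    rw [hβSK2, div_pow, mul_pow, Real.sq_sqrt hγ.le, hβG2sq]
    field_simp
  have e1 : Real.sqrt (βSK1 ^ 2 * qb1) = β * Real.sqrt (γ * qb1) / D₁ := by
    rw [show βSK1 ^ 2 * qb1 = (β * Real.sqrt (γ * qb1) / D₁) ^ 2 by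
      rw [div_pow, mul_pow, Real.sq_sqrt (by positivity), hSK1sq]; ring]
    exact Real.sqrt_sq (by positivity)
  have e2 : Real.sqrt (βSK2 ^ 2 * qb2 - βSK1 ^ 2 * qb1)
      = β * Real.sqrt (γ * (qb2 - qb1) / (D₁ * D₂)) := by
    have hdiff : βSK2 ^ 2 * qb2 - βSK1 ^ 2 * qb1
        = β ^ 2 * (γ * (qb2 - qb1) / (D₁ * D₂)) := by
      rw [hSK2sq, hSK1sq, hp2, hp1]
      field_simp
      ring
    rw [show βSK2 ^ 2 * qb2 - βSK1 ^ 2 * qb1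
        = (β * Real.sqrt (γ * (qb2 - qb1) / (D₁ * D₂))) ^ 2 by
      rw [mul_pow, Real.sq_sqrt (by
        apply div_nonneg
        · nlinarith
        · positivity)]
      exact hdiff]
    exact Real.sqrt_sq (by positivity)
  have hEq : gExp (fun j1 => Real.log (gExp (fun j2 =>
          Real.cosh (β * mb + j1 * β * Real.sqrt (γ * qb1) / D₁
            + j2 * β * Real.sqrt (γ * (qb2 - qb1) / (D₁ * D₂))) ^ θ)))
      = gExp (fun j1 => Real.log (gExp (fun j2 =>
          Real.cosh (β * mb + j1 * Real.sqrt (βSK1 ^ 2 * qb1)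
            + j2 * Real.sqrt (βSK2 ^ 2 * qb2 - βSK1 ^ 2 * qb1)) ^ θ))) := by
    congr 1
    funext j1
    congr 1
    congr 1
    funext j2
    rw [e1, e2]
    ring_nf
  have hv1 : βSK1 ^ 2 * qb1 = β * γ * pb1 := by
    rw [hSK1sq, hp1]; field_simp
  have hv2 : βSK2 ^ 2 * qb2 = β * γ * pb2 := by
    rw [hSK2sq]; field_simp
  rw [hEq]
  linear_combination (1/2 - (1-θ)*qb2/4) * hv2 - θ*qb1/4 * hv1
end
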